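/- Consider the two-marginal greedy coupling procedure applied to probability vectors p, q on [n]: starting from the n×n zero matrix, at each iteration let a = argmaxᵢ p(i), b = argmaxᵢ q(i), r = min(p(a), q(b)); assign r to entry (a,b) of the joint matrix and update p(a) ← p(a) − r, q(b) ← q(b) − r; repeat until p = q = 0. Then the bipartite support graph of the output matrix M — the bipartite graph on [n] ⊔ [n] with an edge (i,j) whenever M(i,j) ≠ 0 — contains no cycle. Consequently (combined with the fact that acyclic-support nonnegative matrices are masked submatrices of rank-1 matrices), the output of the greedy algorithm satisfies the KKT conditions of the minimum entropy coupling problem for two marginals and is a local optimum. -/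

import Mathlib

/-- The bipartite support graph of an `n × n` matrix `M`: left vertices are the rows,
right vertices are the columns, and row `i` is adjacent to column `j` exactly when
`M i j ≠ 0`. -/
def supportGraph (n : ℕ) (M : Fin n → Fin n → ℝ) : SimpleGraph (Fin n ⊕ Fin n) where
  Adj a b :=
    (∃ i j, a = Sum.inl i ∧ b = Sum.inr j ∧ M i j ≠ 0) ∨
    (∃ i j, a = Sum.inr j ∧ b = Sum.inl i ∧ M i j ≠ 0)
  symm := by
    constructor
    rintro a b (⟨i, j, rfl, rfl, h⟩ | ⟨i, j, rfl, rfl, h⟩)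
    · exact Or.inr ⟨i, j, rfl, rfl, h⟩
    · exact Or.inl ⟨i, j, rfl, rfl, h⟩
  loopless := by
    constructor
    rintro a (⟨i, j, rfl, hb, h⟩ | ⟨i, j, rfl, hb, h⟩) <;> simp at hb

/-- `P` is a coupling of the distributions `p` and `q` on `[n]`: an `n × n` matrix with
nonnegative entries, row sums `p` and column sums `q`. -/
def IsCoupling {n : ℕ} (p q : Fin n → ℝ) (P : Fin n → Fin n → ℝ) : Prop :=
  (∀ i j, 0 ≤ P i j) ∧ (∀ i, ∑ j, P i j = p i) ∧ (∀ j, ∑ i, P i j = q j)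

/-- Shannon entropy (base 2) of an `n × n` joint distribution matrix. -/
noncomputable def matrixEntropy {n : ℕ} (P : Fin n → Fin n → ℝ) : ℝ :=
  -∑ i, ∑ j, P i j * Real.logb 2 (P i j)

/-- `Greedy n p q M`: the matrix `M` is a possible output of the two-marginal greedy
coupling procedure run on the (residual) marginal vectors `p`, `q`.  Starting from the
zero matrix, each step picks `a = argmaxᵢ p(i)`, `b = argmaxⱼ q(j)`, sets
`r = min (p a) (q b)`, assigns mass `r` to entry `(a, b)` and subtracts `r` from `p a`
and from `q b`; the procedure stops when `p = q = 0`. -/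
inductive Greedy (n : ℕ) : (Fin n → ℝ) → (Fin n → ℝ) → (Fin n → Fin n → ℝ) → Prop
  | zero : Greedy n (fun _ => 0) (fun _ => 0) (fun _ _ => 0)
  | step (p q : Fin n → ℝ) (M : Fin n → Fin n → ℝ) (a b : Fin n) (r : ℝ)
      (ha : ∀ i, p i ≤ p a) (hb : ∀ j, q j ≤ q b) (hr : r = min (p a) (q b))
      (hrec : Greedy n (Function.update p a (p a - r))
        (Function.update q b (q b - r)) M) :
      Greedy n p q (fun i j => M i j + if i = a ∧ j = b then r else 0)


/-!
Each greedy step exhausts row `a` or column `b`, so, reading the run backwards, the cell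
`(a, b)` enters the support of the output as a pendant edge. A pendant edge creates no cycle,
and it also cannot carry a perturbation with zero marginals; hence the support graph is a
forest and the output `M` is a vertex of its transportation polytope.

At such a vertex a nearby coupling `Q` satisfies `‖Q - M‖ ≤ K t`, where `t` is the mass `Q`
puts outside the support of `M`. On the support the entropy therefore changes by `O(t)`, while
outside it gains `Σ -Q log Q ≥ t log (1/ε)` when those entries are at most `ε`; for small `ε`
the gain wins, so `M` is a local minimum of the entropy.
-/

open Finset SimpleGraph Filter Topology Real

section Support

variable {ι κ : Type*}

noncomputable def offSupport (M D : ι → κ → ℝ) : ι → κ → ℝ :=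
  fun i j => if M i j = 0 then D i j else 0

noncomputable def onSupport (M D : ι → κ → ℝ) : ι → κ → ℝ :=
  fun i j => if M i j = 0 then 0 else D i j

theorem onSupport_add_offSupport (M D : ι → κ → ℝ) (i : ι) (j : κ) :
    onSupport M D i j + offSupport M D i j = D i j := by
  simp only [onSupport, offSupport]
  split_ifs <;> simp

variable [Fintype ι] [Fintype κ]

/-- `M` is a vertex of the polytope of nonnegative matrices with the marginals of `M`. -/
def SupportRigid (M : ι → κ → ℝ) : Prop :=
  ∀ D : ι → κ → ℝ, (∀ i, ∑ j, D i j = 0) → (∀ j, ∑ i, D i j = 0) →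
    (∀ i j, M i j = 0 → D i j = 0) → D = 0

theorem SupportRigid.transpose {M : ι → κ → ℝ} (hM : SupportRigid M) :
    SupportRigid (fun j i => M i j) := by
  intro D hrow hcol hD
  have := hM (fun i j => D j i) hcol hrow fun i j hij => hD j i hij
  funext j i
  exact congr_fun₂ this i j

theorem SupportRigid.of_pendant_row {M M' : ι → κ → ℝ} {a : ι} {b : κ} (hM : SupportRigid M)
    (hoff : ∀ i, i ≠ a → M' i = M i) (hrow : ∀ j, j ≠ b → M' a j = 0) :
    SupportRigid M' := by
  intro D hDrow hDcol hD
  have hDab : ∀ j, j ≠ b → D a j = 0 := fun j hj => hD a j (hrow j hj)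
  have hDa : ∀ j, D a j = 0 := by
    intro j
    rcases eq_or_ne j b with rfl | hj
    · simpa [sum_eq_single j fun k _ hk => hDab k hk] using hDrow a
    · exact hDab j hj
  refine hM D hDrow hDcol fun i j hij => ?_
  rcases eq_or_ne i a with rfl | hi
  · exact hDa j
  · exact hD i j (by rw [hoff i hi, hij])

noncomputable def supportConstraints (M : ι → κ → ℝ) :
    (ι → κ → ℝ) →ₗ[ℝ] (ι → ℝ) × (κ → ℝ) × (ι → κ → ℝ) where
  toFun D := (fun i => ∑ j, D i j, fun j => ∑ i, D i j, offSupport M D)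
  map_add' D E := by
    ext <;> simp only [offSupport, Pi.add_apply, sum_add_distrib, Prod.fst_add, Prod.snd_add]
    split_ifs <;> simp
  map_smul' c D := by
    ext <;> simp [offSupport, mul_sum]

theorem SupportRigid.injective_supportConstraints {M : ι → κ → ℝ} (h : SupportRigid M) :
    Function.Injective (supportConstraints M) := by
  rw [← LinearMap.ker_eq_bot, LinearMap.ker_eq_bot']
  intro D hD
  simp only [supportConstraints, LinearMap.coe_mk, AddHom.coe_mk, Prod.mk_eq_zero] at hD
  obtain ⟨hrow, hcol, hoff⟩ := hD
  exact h D (congr_fun hrow) (congr_fun hcol) fun i j hij => by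
    simpa [offSupport, hij] using congr_fun₂ hoff i j

theorem SupportRigid.exists_norm_le_mul_norm_offSupport {M : ι → κ → ℝ} (h : SupportRigid M) :
    ∃ K : NNReal, ∀ D, (∀ i, ∑ j, D i j = 0) → (∀ j, ∑ i, D i j = 0) →
      ‖D‖ ≤ K * ‖offSupport M D‖ := by
  obtain ⟨K, -, hK⟩ :=
    (supportConstraints M).injective_iff_antilipschitz.1 h.injective_supportConstraints
  refine ⟨K, fun D hrow hcol => ?_⟩
  have hD : supportConstraints M D = (0, 0, offSupport M D) := by
    simp [supportConstraints, funext hrow, funext hcol, Pi.zero_def]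
  simpa [hD] using hK.le_mul_norm (map_zero _) D

theorem norm_le_sum_sum_of_nonneg {X : ι → κ → ℝ} (hX : ∀ i j, 0 ≤ X i j) :
    ‖X‖ ≤ ∑ i, ∑ j, X i j := by
  have hrow : ∀ i, 0 ≤ ∑ j, X i j := fun i => sum_nonneg fun j _ => hX i j
  have hsum : 0 ≤ ∑ i, ∑ j, X i j := sum_nonneg fun i _ => hrow i
  refine (pi_norm_le_iff_of_nonneg hsum).2 fun i => (pi_norm_le_iff_of_nonneg hsum).2 fun j => ?_
  rw [Real.norm_of_nonneg (hX i j)]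
  exact (single_le_sum (fun j _ => hX i j) (mem_univ j)).trans
    (single_le_sum (fun i _ => hrow i) (mem_univ i))

theorem mul_le_negMulLog_of_le_exp_neg {s x : ℝ} (hx : 0 ≤ x) (hxs : x ≤ exp (-s)) :
    s * x ≤ negMulLog x := by
  rcases hx.eq_or_lt with rfl | hx
  · simp
  · have : s ≤ -log x := le_neg.2 ((log_le_iff_le_exp hx).2 hxs)
    calc s * x ≤ -log x * x := mul_le_mul_of_nonneg_right this hx.le
      _ = negMulLog x := by rw [negMulLog]; ring

theorem eventually_mul_sum_offSupport_le_negMulLog (M : ι → κ → ℝ) (s : ℝ) :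
    ∀ᶠ Q in 𝓝 M, (∀ i j, 0 ≤ Q i j) →
      s * ∑ i, ∑ j, offSupport M Q i j ≤
        ∑ i, ∑ j, offSupport M (fun i j => negMulLog (Q i j)) i j := by
  have hsmall : ∀ᶠ Q in 𝓝 M, ∀ i j, M i j = 0 → Q i j ≤ exp (-s) := by
    refine eventually_all.2 fun i => eventually_all.2 fun j => ?_
    by_cases hij : M i j = 0
    · have hcont : Continuous fun Q : ι → κ → ℝ => Q i j := by fun_prop
      exact ((hcont.tendsto M).eventually_lt_const (hij ▸ exp_pos (-s))).mono fun Q hQ _ => hQ.le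
    · exact .of_forall fun Q h => absurd h hij
  filter_upwards [hsmall] with Q hQsmall hQ0
  simp only [mul_sum]
  refine sum_le_sum fun i _ => sum_le_sum fun j _ => ?_
  unfold offSupport
  split_ifs with h
  · exact mul_le_negMulLog_of_le_exp_neg (hQ0 i j) (hQsmall i j h)
  · simp

theorem differentiableAt_sum_onSupport_negMulLog (M : ι → κ → ℝ) :
    DifferentiableAt ℝ
      (fun Q : ι → κ → ℝ => ∑ i, ∑ j, onSupport M (fun i j => negMulLog (Q i j)) i j) M := by
  refine DifferentiableAt.fun_sum fun i _ => DifferentiableAt.fun_sum fun j _ => ?_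
  by_cases hij : M i j = 0
  · simp only [onSupport, hij, if_true]
    exact differentiableAt_const _
  · simp only [onSupport, hij, if_false]
    exact (differentiableAt_negMulLog_iff.2 hij).comp M
      (f := fun Q : ι → κ → ℝ => Q i j) (by fun_prop)

end Support

variable {n : ℕ}

theorem SupportRigid.exists_norm_sub_le_of_isCoupling {p q : Fin n → ℝ} {M : Fin n → Fin n → ℝ}
    (hrigid : SupportRigid M) (hM : IsCoupling p q M) :
    ∃ K : NNReal, ∀ Q, IsCoupling p q Q → ‖Q - M‖ ≤ K * ∑ i, ∑ j, offSupport M Q i j := by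
  obtain ⟨K, hK⟩ := hrigid.exists_norm_le_mul_norm_offSupport
  refine ⟨K, fun Q ⟨hQ0, hQrow, hQcol⟩ => ?_⟩
  have hoff : offSupport M (Q - M) = offSupport M Q := by
    funext i j
    unfold offSupport
    split_ifs with h <;> simp [h]
  have hoff_nonneg : ∀ i j, 0 ≤ offSupport M Q i j := fun i j => by
    unfold offSupport
    split_ifs <;> simp [hQ0 i j]
  calc ‖Q - M‖ ≤ K * ‖offSupport M (Q - M)‖ :=
        hK (Q - M) (fun i => by simp [sum_sub_distrib, hQrow, hM.2.1])
          (fun j => by simp [sum_sub_distrib, hQcol, hM.2.2])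
    _ ≤ K * ∑ i, ∑ j, offSupport M Q i j := by
        rw [hoff]
        gcongr
        exact norm_le_sum_sum_of_nonneg hoff_nonneg

theorem SupportRigid.isLocalMinOn_sum_negMulLog {p q : Fin n → ℝ} {M : Fin n → Fin n → ℝ}
    (hrigid : SupportRigid M) (hM : IsCoupling p q M) :
    IsLocalMinOn (fun Q : Fin n → Fin n → ℝ => ∑ i, ∑ j, negMulLog (Q i j))
      {Q | IsCoupling p q Q} M := by
  obtain ⟨K, hK⟩ := hrigid.exists_norm_sub_le_of_isCoupling hM
  set g := fun Q : Fin n → Fin n → ℝ => ∑ i, ∑ j, onSupport M (fun i j => negMulLog (Q i j)) i j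
  set gain := fun Q : Fin n → Fin n → ℝ =>
    ∑ i, ∑ j, offSupport M (fun i j => negMulLog (Q i j)) i j
  have hsplit : ∀ Q : Fin n → Fin n → ℝ, ∑ i, ∑ j, negMulLog (Q i j) = g Q + gain Q := by
    intro Q
    simp only [g, gain, ← sum_add_distrib, onSupport_add_offSupport]
  have hgainM : gain M = 0 :=
    sum_eq_zero fun i _ => sum_eq_zero fun j _ => by
      unfold offSupport
      split_ifs with h <;> simp [h]
  obtain ⟨c, hc, hgc⟩ := (differentiableAt_sum_onSupport_negMulLog M).isBigO_sub.exists_pos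
  filter_upwards [nhdsWithin_le_nhds hgc.bound,
    nhdsWithin_le_nhds (eventually_mul_sum_offSupport_le_negMulLog M (c * K)),
    self_mem_nhdsWithin] with Q hgQ hgainQ hQ
  calc ∑ i, ∑ j, negMulLog (M i j) = g M := by rw [hsplit, hgainM, add_zero]
    _ ≤ g Q + c * ‖Q - M‖ := by linarith [(abs_sub_le_iff.1 hgQ).2]
    _ ≤ g Q + c * (K * ∑ i, ∑ j, offSupport M Q i j) := by gcongr; exact hK Q hQ
    _ ≤ g Q + gain Q := by rw [← mul_assoc]; gcongr; exact hgainQ hQ.1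
    _ = ∑ i, ∑ j, negMulLog (Q i j) := (hsplit Q).symm

theorem matrixEntropy_eq_sum_negMulLog (P : Fin n → Fin n → ℝ) :
    matrixEntropy P = (∑ i, ∑ j, negMulLog (P i j)) / log 2 := by
  simp only [matrixEntropy, negMulLog, logb, sum_div, ← sum_neg_distrib]
  congr! 2 with i _ j _
  ring

theorem SupportRigid.isLocalMinOn_matrixEntropy {p q : Fin n → ℝ} {M : Fin n → Fin n → ℝ}
    (hrigid : SupportRigid M) (hM : IsCoupling p q M) :
    IsLocalMinOn matrixEntropy {Q | IsCoupling p q Q} M := by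
  filter_upwards [hrigid.isLocalMinOn_sum_negMulLog hM] with Q hQ
  rw [matrixEntropy_eq_sum_negMulLog, matrixEntropy_eq_sum_negMulLog]
  exact div_le_div_of_nonneg_right hQ (log_nonneg one_le_two)

section SupportGraph

variable {M M' : Fin n → Fin n → ℝ}

@[simp]
theorem supportGraph_adj_inl_inr {i j : Fin n} :
    (supportGraph n M).Adj (.inl i) (.inr j) ↔ M i j ≠ 0 := by
  simp [supportGraph]

@[simp]
theorem supportGraph_adj_inr_inl {i j : Fin n} :
    (supportGraph n M).Adj (.inr j) (.inl i) ↔ M i j ≠ 0 := by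
  simp [supportGraph]

@[simp]
theorem supportGraph_not_adj_inl_inl {i i' : Fin n} :
    ¬(supportGraph n M).Adj (.inl i) (.inl i') := by
  simp [supportGraph]

@[simp]
theorem supportGraph_not_adj_inr_inr {j j' : Fin n} :
    ¬(supportGraph n M).Adj (.inr j) (.inr j') := by
  simp [supportGraph]

def supportGraphTransposeIso (M : Fin n → Fin n → ℝ) :
    supportGraph n (fun i j => M j i) ≃g supportGraph n M where
  toEquiv := Equiv.sumComm _ _
  map_rel_iff' := by
    rintro (i | j) (i' | j') <;> simp

theorem isAcyclic_supportGraph_of_pendant_row {a b : Fin n}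
    (hM : (supportGraph n M).IsAcyclic) (hzero : ∀ j, M a j = 0)
    (hoff : ∀ i, i ≠ a → M' i = M i) (hrow : ∀ j, j ≠ b → M' a j = 0) :
    (supportGraph n M').IsAcyclic := by
  have hsupp : ∀ i j, M' i j ≠ 0 → M i j ≠ 0 ∨ (i = a ∧ j = b) := by
    intro i j hij
    rcases eq_or_ne i a with rfl | hi
    · exact .inr ⟨rfl, by_contra fun hj => hij (hrow j hj)⟩
    · exact .inl (by rwa [← hoff i hi])
  have hle : supportGraph n M' ≤ supportGraph n M ⊔ edge (.inl a) (.inr b) := by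
    rintro (i | j) (i' | j') <;> simp [edge_adj]
    exacts [hsupp i j', fun h => (hsupp i' j h).imp id And.symm]
  have hisolated : (supportGraph n M).neighborSet (.inl a) = ∅ := by
    ext (i | j) <;> simp [hzero]
  exact (hM.sup_edge_of_not_reachable
    (not_reachable_of_neighborSet_left_eq_empty (by simp) hisolated)).anti hle

end SupportGraph

namespace Greedy

variable {p q : Fin n → ℝ} {M : Fin n → Fin n → ℝ}

theorem transpose (h : Greedy n p q M) : Greedy n q p (fun i j => M j i) := by
  induction h with
  | zero => exact .zero
  | step p q M a b r ha hb hr _ ih =>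
    simpa only [and_comm] using Greedy.step q p _ b a r hb ha (hr.trans (min_comm _ _)) ih

theorem sum_row (h : Greedy n p q M) (i : Fin n) : ∑ j, M i j = p i := by
  induction h with
  | zero => simp
  | step p q M a b r _ _ _ _ ih =>
    rw [sum_add_distrib, ih]
    rcases eq_or_ne i a with rfl | hi <;> simp [*]

theorem sum_col (h : Greedy n p q M) (j : Fin n) : ∑ i, M i j = q j :=
  h.transpose.sum_row j

theorem nonneg (h : Greedy n p q M) (hp : 0 ≤ p) (hq : 0 ≤ q) : ∀ i j, 0 ≤ M i j := by
  induction h with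
  | zero => simp
  | step p q M a b r _ _ hr _ ih =>
    have hr0 : 0 ≤ r := hr ▸ le_min (hp a) (hq b)
    have hM := ih (le_update_iff.2 ⟨by simp [hr], fun i _ => hp i⟩)
      (le_update_iff.2 ⟨by simp [hr], fun j _ => hq j⟩)
    exact fun i j => add_nonneg (hM i j) (ite_nonneg hr0 le_rfl)

theorem isCoupling (h : Greedy n p q M) (hp : 0 ≤ p) (hq : 0 ≤ q) : IsCoupling p q M :=
  ⟨h.nonneg hp hq, h.sum_row, h.sum_col⟩

theorem row_eq_zero_or_col_eq_zero {a b : Fin n} {r : ℝ}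
    (h : Greedy n (Function.update p a (p a - r)) (Function.update q b (q b - r)) M)
    (hr : r = min (p a) (q b)) (hM : ∀ i j, 0 ≤ M i j) :
    (∀ j, M a j = 0) ∨ (∀ i, M i b = 0) := by
  rcases min_cases (p a) (q b) with ⟨hra, -⟩ | ⟨hrb, -⟩
  · exact .inl fun j => (sum_eq_zero_iff_of_nonneg fun j _ => hM a j).1
      (by simp [h.sum_row, hr, hra]) j (mem_univ j)
  · exact .inr fun i => (sum_eq_zero_iff_of_nonneg fun i _ => hM i b).1
      (by simp [h.sum_col, hr, hrb]) i (mem_univ i)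

theorem isAcyclic_and_supportRigid (h : Greedy n p q M) (hp : 0 ≤ p) (hq : 0 ≤ q) :
    (supportGraph n M).IsAcyclic ∧ SupportRigid M := by
  induction h with
  | zero =>
    exact ⟨isAcyclic_bot.anti (by rintro (i | j) (i' | j') <;> simp),
      fun D _ _ hD => funext₂ fun i j => hD i j rfl⟩
  | step p q M a b r _ _ hr hrec ih =>
    have hp' : 0 ≤ Function.update p a (p a - r) :=
      le_update_iff.2 ⟨by simp [hr], fun i _ => hp i⟩
    have hq' : 0 ≤ Function.update q b (q b - r) :=
      le_update_iff.2 ⟨by simp [hr], fun j _ => hq j⟩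
    obtain ⟨hacyclic, hrigid⟩ := ih hp' hq'
    set M' : Fin n → Fin n → ℝ := fun i j => M i j + if i = a ∧ j = b then r else 0
    rcases hrec.row_eq_zero_or_col_eq_zero hr (hrec.nonneg hp' hq') with hzero | hzero
    · have hoff : ∀ i, i ≠ a → M' i = M i := fun i hi => funext fun j => by simp [M', hi]
      have hrow : ∀ j, j ≠ b → M' a j = 0 := fun j hj => by simp [M', hj, hzero]
      exact ⟨isAcyclic_supportGraph_of_pendant_row hacyclic hzero hoff hrow,
        hrigid.of_pendant_row hoff hrow⟩
    · have hoff : ∀ j, j ≠ b → (fun i => M' i j) = fun i => M i j :=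
        fun j hj => funext fun i => by simp [M', hj]
      have hcol : ∀ i, i ≠ a → M' i b = 0 := fun i hi => by simp [M', hi, hzero]
      refine ⟨(supportGraphTransposeIso M').isAcyclic_iff.1 ?_,
        (hrigid.transpose.of_pendant_row hoff hcol).transpose⟩
      exact isAcyclic_supportGraph_of_pendant_row
        ((supportGraphTransposeIso M).isAcyclic_iff.2 hacyclic) hzero hoff hcol

end Greedy

theorem greedy_acyclic_and_local_min_general
    (n : ℕ) (p q : Fin n → ℝ)
    (hp0 : ∀ i, 0 ≤ p i)
    (hq0 : ∀ j, 0 ≤ q j)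
    (M : Fin n → Fin n → ℝ) (hM : Greedy n p q M) :
    (supportGraph n M).IsAcyclic ∧
      IsLocalMinOn matrixEntropy {Q | IsCoupling p q Q} M := by
  obtain ⟨hacyclic, hrigid⟩ := hM.isAcyclic_and_supportRigid hp0 hq0
  exact ⟨hacyclic, hrigid.isLocalMinOn_matrixEntropy (hM.isCoupling hp0 hq0)⟩

/-- **The greedy coupling has acyclic support and is a local optimum.**
Let `p, q` be probability distributions on `[n]` and let `M` be an output of the greedy
coupling procedure applied to `p` and `q`.  Then the bipartite support graph of `M`
contains no cycle; consequently (being a masked submatrix of a rank-1 matrix, hence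
satisfying the KKT conditions of the two-marginal minimum entropy coupling problem) `M`
is a local minimizer of the Shannon entropy over the polytope of couplings of `p` and
`q`. -/
theorem greedy_acyclic_and_local_min
    (n : ℕ) (p q : Fin n → ℝ)
    (hp0 : ∀ i, 0 ≤ p i) (hpsum : ∑ i, p i = 1)
    (hq0 : ∀ j, 0 ≤ q j) (hqsum : ∑ j, q j = 1)
    (M : Fin n → Fin n → ℝ) (hM : Greedy n p q M) :
    (supportGraph n M).IsAcyclic ∧
      IsLocalMinOn matrixEntropy {Q | IsCoupling p q Q} M :=
  greedy_acyclic_and_local_min_general n p q hp0 hq0 M hM
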